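/- Let a, b be parameters with 2b−1 not zero or a negative integer. Define c₀ = 1, c₁ = 2a/(2b−1), and for n ≥ 2, cₙ = [ (n+2(a−1))(n+2(a−b)) c_{n−2} + 2(n+a−1) c_{n−1} ] / (n(n+2b−2)). Then for all n ≥ 0, c_{2n} = (a)_n (a−b+3/2)_n / (n! (b−1/2)_n) and c_{2n+1} = c₁ · (a+1)_n (a−b+3/2)_n / (n! (b+1/2)_n). -/

import Mathlib

open scoped Nat

/-- Pochhammer symbol (rising factorial). -/
noncomputable def poch (a : ℝ) (n : ℕ) : ℝ := (ascPochhammer ℝ n).eval a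

/-- Gauss hypergeometric series ₂F₁(a,b;c;z). -/
noncomputable def F (a b c z : ℝ) : ℝ :=
  ∑' n : ℕ, poch a n * poch b n / (poch c n * (n ! : ℝ)) * z ^ n

/-!
Both subsequences `c (2n)` and `c (2n+1)` are hypergeometric, and they interlace through
first-order ratios: passing from `c (2n)` to `c (2n+1)` multiplies by `(a+n)/(b-1/2+n)`,
and from `c (2n+1)` to `c (2n+2)` by `(a-b+3/2+n)/(n+1)`. Once denominators are cleared,
the three-term recurrence at `2n+2` and at `2n+3` is a linear combination of these two
ratio relations, so the closed forms follow by induction on `n`, two indices at a time.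
-/

@[simp]
lemma poch_zero (x : ℝ) : poch x 0 = 1 := by simp [poch]

lemma poch_succ (x : ℝ) (n : ℕ) : poch x (n + 1) = poch x n * (x + n) :=
  ascPochhammer_succ_eval n x

lemma poch_succ_left (x : ℝ) (n : ℕ) : poch x (n + 1) = x * poch (x + 1) n := by
  simp [poch, ascPochhammer_succ_left]

noncomputable def frobeniusStep (a b : ℝ) (n : ℕ) (u v : ℝ) : ℝ :=
  (((n : ℝ) + 2 * (a - 1)) * ((n : ℝ) + 2 * (a - b)) * u + 2 * ((n : ℝ) + a - 1) * v)
    / ((n : ℝ) * ((n : ℝ) + 2 * b - 2))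

section Coefficients

variable (a b : ℝ)

noncomputable def evenCoeff (n : ℕ) : ℝ :=
  poch a n * poch (a - b + 3/2) n / ((n ! : ℝ) * poch (b - 1/2) n)

noncomputable def oddCoeff (n : ℕ) : ℝ :=
  poch a (n + 1) * poch (a - b + 3/2) n / ((n ! : ℝ) * poch (b - 1/2) (n + 1))

lemma oddCoeff_eq_mul (n : ℕ) :
    oddCoeff a b n =
      2 * a / (2 * b - 1) *
        (poch (a + 1) n * poch (a - b + 3/2) n / ((n ! : ℝ) * poch (b + 1/2) n)) := by
  rw [oddCoeff, poch_succ_left, poch_succ_left, show b - 1/2 + 1 = b + 1/2 by ring,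
    show b - 1/2 = (2 * b - 1) / 2 by ring]
  simp only [div_eq_mul_inv, mul_inv]
  ring

lemma oddCoeff_eq_evenCoeff_mul (n : ℕ) :
    oddCoeff a b n = evenCoeff a b n * (a + n) / (b - 1/2 + n) := by
  rw [oddCoeff, evenCoeff, poch_succ, poch_succ]
  simp only [div_eq_mul_inv, mul_inv]
  ring

lemma evenCoeff_succ_mul (n : ℕ) :
    evenCoeff a b (n + 1) * (n + 1) = oddCoeff a b n * (a - b + 3/2 + n) := by
  rw [evenCoeff, oddCoeff, poch_succ (a - b + 3/2), Nat.factorial_succ]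
  push_cast
  field_simp

variable {b} (hb : ∀ k : ℕ, 2 * b - 1 + (k : ℝ) ≠ 0)
include hb

lemma sub_half_add_ne_zero (n : ℕ) : b - 1/2 + n ≠ 0 := fun h =>
  hb (2 * n) (by push_cast; linarith)

lemma frobeniusStep_denom_ne_zero {n : ℕ} (hn : 1 ≤ n) : (n : ℝ) * ((n : ℝ) + 2 * b - 2) ≠ 0 := by
  obtain ⟨m, rfl⟩ := Nat.exists_eq_add_of_le' hn
  refine mul_ne_zero (by positivity) fun h => hb m ?_
  push_cast at h
  linarith

lemma oddCoeff_mul (n : ℕ) : oddCoeff a b n * (b - 1/2 + n) = evenCoeff a b n * (a + n) := by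
  rw [oddCoeff_eq_evenCoeff_mul, div_mul_cancel₀ _ (sub_half_add_ne_zero hb n)]

lemma evenCoeff_succ_eq_frobeniusStep (n : ℕ) :
    evenCoeff a b (n + 1) = frobeniusStep a b (2 * (n + 1)) (evenCoeff a b n) (oddCoeff a b n) := by
  rw [frobeniusStep, eq_div_iff (frobeniusStep_denom_ne_zero hb (by omega))]
  have hodd := oddCoeff_mul a hb n
  have heven := evenCoeff_succ_mul a b n
  push_cast
  linear_combination 4 * (n + b) * heven + 2 * (2 * n + 2 + 2 * a - 2 * b) * hodd

lemma oddCoeff_succ_eq_frobeniusStep (n : ℕ) :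
    oddCoeff a b (n + 1) =
      frobeniusStep a b (2 * (n + 1) + 1) (oddCoeff a b n) (evenCoeff a b (n + 1)) := by
  rw [frobeniusStep, eq_div_iff (frobeniusStep_denom_ne_zero hb (by omega))]
  have hodd := oddCoeff_mul a hb (n + 1)
  have heven := evenCoeff_succ_mul a b n
  push_cast at hodd ⊢
  linear_combination 2 * (2 * n + 3) * hodd + 2 * (2 * n + 1 + 2 * a) * heven

end Coefficients

theorem frobenius_coeffs_second_case_lambda_zero (a b : ℝ)
    (hb : ∀ k : ℕ, 2 * b - 1 + (k : ℝ) ≠ 0)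
    (c : ℕ → ℝ) (hc0 : c 0 = 1) (hc1 : c 1 = 2 * a / (2 * b - 1))
    (hrec : ∀ n : ℕ, 2 ≤ n → c n =
      (((n : ℝ) + 2 * (a - 1)) * ((n : ℝ) + 2 * (a - b)) * c (n - 2)
        + 2 * ((n : ℝ) + a - 1) * c (n - 1)) / ((n : ℝ) * ((n : ℝ) + 2 * b - 2))) :
    ∀ n : ℕ,
      c (2 * n) = poch a n * poch (a - b + 3/2) n / ((n ! : ℝ) * poch (b - 1/2) n) ∧
      c (2 * n + 1) =
        c 1 * (poch (a + 1) n * poch (a - b + 3/2) n / ((n ! : ℝ) * poch (b + 1/2) n)) := by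
  suffices h : ∀ n, c (2 * n) = evenCoeff a b n ∧ c (2 * n + 1) = oddCoeff a b n by
    intro n
    rw [hc1, ← oddCoeff_eq_mul]
    exact h n
  intro n
  induction n with
  | zero => simp [evenCoeff, oddCoeff_eq_mul, hc0, hc1]
  | succ n ih =>
    have heven : c (2 * (n + 1)) = evenCoeff a b (n + 1) := by
      rw [evenCoeff_succ_eq_frobeniusStep a hb, ← ih.1, ← ih.2]
      exact hrec _ (by omega)
    refine ⟨heven, ?_⟩
    rw [oddCoeff_succ_eq_frobeniusStep a hb, ← ih.2, ← heven]
    exact hrec _ (by omega)
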